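/- Let C be a configuration of k robots on an n-ring that is in task T6 and was reached, along an execution under a Round Robin scheduler, from a configuration in task T5 by a single move m5 (so the middle vertex of the three consecutive occupied vertices is occupied by exactly one robot, the robot that moved last). Suppose every robot activated in a configuration in T6 executes move m6. Then the first configuration along the execution after C that is not in T6 occurs within at most 1 epoch, and it is in task T7. -/
import Mathlib


/-!
Robots on an anonymous `n`-ring (the cycle on `ZMod n`).  A configuration of `k`
robots is a function `Fin k → ZMod n` (several robots may share a vertex: a
multiplicity).  Robots are anonymous, oblivious and disoriented: an algorithm
only sees the set of occupied vertices expressed as offsets in the robot's own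
local frame, whose orientation (reflection) is chosen by the adversary at each
activation.  A sequential scheduler activates one robot per round.
-/

namespace RobotRing

/-- A configuration of `k` robots on the `n`-ring: robot `i` sits on vertex `C i`. -/
abbrev Config (n k : ℕ) := Fin k → ZMod n

/-- The set of occupied vertices of a configuration. -/
def occ {n k : ℕ} (C : Config n k) : Set (ZMod n) := Set.range C

/-- A boolean orientation viewed as the ring element `±1`. -/
def sgn {n : ℕ} (e : Bool) : ZMod n := if e then 1 else -1

/-- The local view of a robot located at `p` whose local frame has orientation `e`:
the occupied vertices, expressed as offsets in the robot's local frame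
(robots cannot detect multiplicities, and perceive positions only relative to
themselves, up to reflection). -/
def view {n k : ℕ} (C : Config n k) (p : ZMod n) (e : Bool) : Set (ZMod n) :=
  {d : ZMod n | p + sgn e * d ∈ occ C}

/-- A deterministic algorithm: to every local view it assigns a move,
`0` = stay still (nil), `±1` = move to an adjacent vertex, in the local frame. -/
abbrev Algo (n : ℕ) := Set (ZMod n) → SignType

/-- One activation: robot `i` is activated, the adversary chooses the orientation
`e` of its local frame (robots are disoriented and chirality-free, so a
reflection-ambiguous move direction is resolved by the adversary), and the robot
moves instantaneously as the algorithm prescribes on its view. -/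
def step {n k : ℕ} (A : Algo n) (C : Config n k) (i : Fin k) (e : Bool) : Config n k :=
  Function.update C i (C i + sgn e * (SignType.cast (A (view C (C i) e)) : ZMod n))

/-- The execution of algorithm `A` from the initial configuration `C₀` under the
sequential scheduler `sched` (one robot per round) and the adversarial
orientation choices `env`. -/
def exec {n k : ℕ} (A : Algo n) (C₀ : Config n k) (sched : ℕ → Fin k) (env : ℕ → Bool) :
    ℕ → Config n k
  | 0 => C₀
  | t + 1 => step A (exec A C₀ sched env t) (sched t) (env t)

/-- Fairness of a sequential (SEQ) scheduler: every robot is activated infinitely often. -/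
def Fair {k : ℕ} (sched : ℕ → Fin k) : Prop :=
  ∀ (i : Fin k) (t : ℕ), ∃ t' ≥ t, sched t' = i

/-- A Round Robin scheduler: the `k` robots are activated one per round in a fixed
order which repeats forever (each robot is activated exactly once per epoch of
`k` consecutive rounds). -/
def IsRoundRobin {k : ℕ} (sched : ℕ → Fin k) : Prop :=
  ∃ π : Equiv.Perm (Fin k), ∀ (t : ℕ) (h : t % k < k), sched t = π ⟨t % k, h⟩

/-- The execution `E` solves Gathering: after finitely many rounds all robots
occupy one common vertex and no robot ever moves afterwards. -/
def Solves {n k : ℕ} (E : ℕ → Config n k) : Prop :=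
  ∃ T : ℕ, ∀ t ≥ T, (∀ i j : Fin k, E t i = E t j) ∧ E (t + 1) = E t

/-- The ring distance between two vertices of the `n`-ring. -/
def ringDist {n : ℕ} (a b : ZMod n) : ℕ := min (a - b).val (b - a).val

/-! ### Holes, islands, the boolean properties, the tasks `T1`–`T8`,
the unsolvable configurations `UC`, and the moves `m1`–`m7` of GatheRRing. -/

/-- The arc of `m` consecutive vertices of the ring starting at `a`. -/
def arc {n : ℕ} (a : ZMod n) (m : ℕ) : Set (ZMod n) :=
  {v | ∃ i : ℕ, i < m ∧ v = a + (i : ZMod n)}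

/-- `H` is a hole of the occupied set `S`: a maximal nonempty set of consecutive
empty vertices. -/
def IsHole {n : ℕ} (S H : Set (ZMod n)) : Prop :=
  ∃ (a : ZMod n) (m : ℕ), 0 < m ∧ H = arc a m ∧ (∀ v ∈ H, v ∉ S) ∧
    a - 1 ∈ S ∧ a + (m : ZMod n) ∈ S

/-- `I` is an island of the occupied set `S`: a maximal set of consecutive
occupied vertices. -/
def IsIsland {n : ℕ} (S I : Set (ZMod n)) : Prop :=
  ∃ (a : ZMod n) (m : ℕ), 0 < m ∧ I = arc a m ∧ (∀ v ∈ I, v ∈ S) ∧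
    a - 1 ∉ S ∧ a + (m : ZMod n) ∉ S

/-- `f`: there are no holes. -/
def propF {n : ℕ} (S : Set (ZMod n)) : Prop := ¬ ∃ H, IsHole S H

/-- `b4`: there is exactly one hole, of size at most `4`. -/
def propB4 {n : ℕ} (S : Set (ZMod n)) : Prop :=
  ∃ H, IsHole S H ∧ H.ncard ≤ 4 ∧ ∀ H', IsHole S H' → H' = H

/-- `b5`: there is exactly one hole, of size at least `5`. -/
def propB5 {n : ℕ} (S : Set (ZMod n)) : Prop :=
  ∃ H, IsHole S H ∧ 5 ≤ H.ncard ∧ ∀ H', IsHole S H' → H' = H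

/-- `h`: there are exactly two holes, one of size `1`, the other of size greater than `1`. -/
def propH {n : ℕ} (S : Set (ZMod n)) : Prop :=
  ∃ H₁ H₂, IsHole S H₁ ∧ IsHole S H₂ ∧ H₁ ≠ H₂ ∧ H₁.ncard = 1 ∧ 1 < H₂.ncard ∧
    ∀ H, IsHole S H → H = H₁ ∨ H = H₂

/-- `o1`: exactly one vertex is occupied. -/
def propO1 {n : ℕ} (S : Set (ZMod n)) : Prop := ∃ u : ZMod n, S = {u}

/-- `o2`: exactly two adjacent vertices are occupied. -/
def propO2 {n : ℕ} (S : Set (ZMod n)) : Prop := ∃ u : ZMod n, S = {u, u + 1}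

/-- `o3`: exactly three consecutive vertices are occupied. -/
def propO3 {n : ℕ} (S : Set (ZMod n)) : Prop := ∃ u : ZMod n, S = {u, u + 1, u + 2}

/-- `p`: exactly two vertices are occupied, separated by exactly one empty vertex. -/
def propP {n : ℕ} (S : Set (ZMod n)) : Prop := ∃ u : ZMod n, S = {u, u + 2} ∧ u + 1 ∉ S

/-- Task `T8` (`pre8 = o1`, no higher task). -/
def inT8 {n : ℕ} (S : Set (ZMod n)) : Prop := propO1 S

def inT7 {n : ℕ} (S : Set (ZMod n)) : Prop := propO2 S ∧ ¬ propO1 S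

def inT6 {n : ℕ} (S : Set (ZMod n)) : Prop := propO3 S ∧ ¬ propO2 S ∧ ¬ propO1 S

def inT5 {n : ℕ} (S : Set (ZMod n)) : Prop :=
  propP S ∧ ¬ propO3 S ∧ ¬ propO2 S ∧ ¬ propO1 S

def inT4 {n : ℕ} (S : Set (ZMod n)) : Prop :=
  propH S ∧ ¬ propP S ∧ ¬ propO3 S ∧ ¬ propO2 S ∧ ¬ propO1 S

def inT3 {n : ℕ} (S : Set (ZMod n)) : Prop :=
  propB5 S ∧ ¬ propH S ∧ ¬ propP S ∧ ¬ propO3 S ∧ ¬ propO2 S ∧ ¬ propO1 S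

def inT2 {n : ℕ} (S : Set (ZMod n)) : Prop :=
  (propB4 S ∨ propF S) ∧ ¬ propB5 S ∧ ¬ propH S ∧ ¬ propP S ∧ ¬ propO3 S ∧
    ¬ propO2 S ∧ ¬ propO1 S

def inT1 {n : ℕ} (S : Set (ZMod n)) : Prop :=
  ¬ (propB4 S ∨ propF S) ∧ ¬ propB5 S ∧ ¬ propH S ∧ ¬ propP S ∧ ¬ propO3 S ∧
    ¬ propO2 S ∧ ¬ propO1 S

/-- The unsolvable configurations (the set `UC`) for Gathering under Round Robin. -/
def UC {n k : ℕ} (C : Config n k) : Prop :=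
  (3 ≤ k ∧ ∃ u : ZMod n, occ C = {u, u + 1}) ∨
  (3 ≤ k ∧ ∃ u : ZMod n, occ C = {u, u + 1, u + 2}) ∨
  (n + 1 ≤ k ∧ occ C = Set.univ) ∨
  (n = 5 ∧ 5 ≤ k ∧ (occ C).ncard = 3 ∧
    ∃ v : ZMod n, (∃ i j : Fin k, i ≠ j ∧ C i = v ∧ C j = v) ∧
      (v + 1 ∈ occ C ∨ v - 1 ∈ occ C)) ∨
  (n = 5 ∧ 5 ≤ k ∧ (occ C).ncard = 4)

/-- `H` is a hole of maximum size (if several holes share the maximum size,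
they are all "biggest holes"). -/
def IsMaxHole {n : ℕ} (S H : Set (ZMod n)) : Prop :=
  IsHole S H ∧ ∀ H', IsHole S H' → H'.ncard ≤ H.ncard

/-- There is a unique hole of maximum size. -/
def UniqueMaxHole {n : ℕ} (S : Set (ZMod n)) : Prop :=
  ∀ H H', IsMaxHole S H → IsMaxHole S H' → H = H'

/-- All islands have size `2`. -/
def AllIslands2 {n : ℕ} (S : Set (ZMod n)) : Prop :=
  ∀ I, IsIsland S I → I.ncard = 2

/-- The distance from `v` to its closest empty vertex in direction `d`. -/
noncomputable def emptyDist {n : ℕ} (S : Set (ZMod n)) (v d : ZMod n) : ℕ :=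
  sInf {m : ℕ | 0 < m ∧ v + (m : ZMod n) * d ∉ S}

/-- A direction on the ring: one of the two unit steps. -/
def Dir {n : ℕ} (d : ZMod n) : Prop := d = 1 ∨ d = -1

/-- The vertex `v` is neighboring a hole of maximum size. -/
def AdjMaxHole {n : ℕ} (S : Set (ZMod n)) (v : ZMod n) : Prop :=
  ∃ H, IsMaxHole S H ∧ (v + 1 ∈ H ∨ v - 1 ∈ H)

/-- Exactly `n - 2` vertices are occupied and the occupied vertices are not all
consecutive. -/
def SpecialN2 {n : ℕ} (S : Set (ZMod n)) : Prop :=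
  S.ncard = n - 2 ∧ ¬ ∃ a : ZMod n, S = arc a (n - 2)

/-- The vertex `v` is neighboring exactly one empty vertex. -/
def OneEmptyNbr {n : ℕ} (S : Set (ZMod n)) (v : ZMod n) : Prop :=
  (v + 1 ∉ S ∧ v - 1 ∈ S) ∨ (v + 1 ∈ S ∧ v - 1 ∉ S)

/-- Move `m1`, as a relation: activating robot `i` in configuration `C` can
produce `C'` (all remaining ties are resolved by the adversary). -/
def M1 {n k : ℕ} (C : Config n k) (i : Fin k) (C' : Config n k) : Prop :=
  (¬ AdjMaxHole (occ C) (C i) ∧ C' = C) ∨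
  (AdjMaxHole (occ C) (C i) ∧
    ((AllIslands2 (occ C) ∧ ¬ UniqueMaxHole (occ C) ∧
        ∃ d : ZMod n, Dir d ∧
          emptyDist (occ C) (C i) d ≤ emptyDist (occ C) (C i) (-d) ∧
          C' = Function.update C i (C i + d)) ∨
     (AllIslands2 (occ C) ∧ UniqueMaxHole (occ C) ∧
        ∃ d : ZMod n, Dir d ∧ C i + d ∈ occ C ∧
          C' = Function.update C i (C i + d)) ∨
     (¬ AllIslands2 (occ C) ∧ SpecialN2 (occ C) ∧ OneEmptyNbr (occ C) (C i) ∧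
        ∃ d : ZMod n, Dir d ∧ C i + d ∈ occ C ∧
          C' = Function.update C i (C i + d)) ∨
     (¬ AllIslands2 (occ C) ∧ SpecialN2 (occ C) ∧ ¬ OneEmptyNbr (occ C) (C i) ∧
        C' = C) ∨
     (¬ AllIslands2 (occ C) ∧ ¬ SpecialN2 (occ C) ∧
        ∃ d : ZMod n, Dir d ∧ (∃ H, IsMaxHole (occ C) H ∧ C i - d ∈ H) ∧
          C' = Function.update C i (C i + d))))

/-- Move `m2`, as a relation. -/
def M2 {n k : ℕ} (C : Config n k) (i : Fin k) (C' : Config n k) : Prop :=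
  (¬ (C i + 1 ∈ occ C ∧ C i - 1 ∈ occ C) ∧ C' = C) ∨
  ((C i + 1 ∈ occ C ∧ C i - 1 ∈ occ C) ∧
    ((∃ w : ZMod n, n = 6 ∧ IsHole (occ C) {w} ∧ (∀ H, IsHole (occ C) H → H = {w}) ∧
        ((C i ≠ w + 3 ∧
            ∃ d : ZMod n, Dir d ∧ ringDist (C i) w < ringDist (C i + d) w ∧
              C' = Function.update C i (C i + d)) ∨
         (C i = w + 3 ∧ C' = C))) ∨
     (¬ (∃ w : ZMod n, n = 6 ∧ IsHole (occ C) {w} ∧ ∀ H, IsHole (occ C) H → H = {w}) ∧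
        ∃ d : ZMod n, Dir d ∧
          emptyDist (occ C) (C i) d ≤ emptyDist (occ C) (C i) (-d) ∧
          C' = Function.update C i (C i + d))))

/-- Move `m3`, as a relation: move toward an empty neighbor, if any. -/
def M3 {n k : ℕ} (C : Config n k) (i : Fin k) (C' : Config n k) : Prop :=
  (∃ d : ZMod n, Dir d ∧ C i + d ∉ occ C ∧ C' = Function.update C i (C i + d)) ∨
  ((∀ d : ZMod n, Dir d → C i + d ∈ occ C) ∧ C' = C)

/-- Move `m4`, as a relation. -/
def M4 {n k : ℕ} (C : Config n k) (i : Fin k) (C' : Config n k) : Prop :=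
  (∃ d : ZMod n, Dir d ∧ (∃ H, IsMaxHole (occ C) H ∧ C i + d ∈ H) ∧ C i - d ∈ occ C ∧
     C' = Function.update C i (C i - d)) ∨
  ((¬ ∃ d : ZMod n, Dir d ∧ (∃ H, IsMaxHole (occ C) H ∧ C i + d ∈ H) ∧ C i - d ∈ occ C) ∧
     C' = C)

/-- Move `m5`, as a relation: move onto the single empty vertex lying between the
two occupied vertices (a tie is resolved by the adversary). -/
def M5 {n k : ℕ} (C : Config n k) (i : Fin k) (C' : Config n k) : Prop :=
  ∃ d : ZMod n, Dir d ∧ C i + d ∉ occ C ∧ C i + d + d ∈ occ C ∧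
    C' = Function.update C i (C i + d)

/-- Move `m6`, as a relation: a robot neighboring an empty vertex moves toward its
occupied neighbor. -/
def M6 {n k : ℕ} (C : Config n k) (i : Fin k) (C' : Config n k) : Prop :=
  (∃ d : ZMod n, Dir d ∧ C i + d ∉ occ C ∧ C i - d ∈ occ C ∧
     C' = Function.update C i (C i - d)) ∨
  ((∀ d : ZMod n, Dir d → C i + d ∈ occ C) ∧ C' = C)

/-- Move `m7`, as a relation: move toward the occupied neighbor. -/
def M7 {n k : ℕ} (C : Config n k) (i : Fin k) (C' : Config n k) : Prop :=
  ∃ d : ZMod n, Dir d ∧ C i + d ∈ occ C ∧ C' = Function.update C i (C i + d)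

/-- One step of Algorithm GatheRRing: the activated robot determines the task of
the perceived configuration and executes the corresponding move (`nil` in `T8`). -/
def GStep {n k : ℕ} (C : Config n k) (i : Fin k) (C' : Config n k) : Prop :=
  (inT1 (occ C) ∧ M1 C i C') ∨ (inT2 (occ C) ∧ M2 C i C') ∨
  (inT3 (occ C) ∧ M3 C i C') ∨ (inT4 (occ C) ∧ M4 C i C') ∨
  (inT5 (occ C) ∧ M5 C i C') ∨ (inT6 (occ C) ∧ M6 C i C') ∨
  (inT7 (occ C) ∧ M7 C i C') ∨ (inT8 (occ C) ∧ C' = C)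

lemma zmod_ncast_ne_zero {n : ℕ} (hn : 3 ≤ n) (m : ℕ) (hm : 0 < m) (hm' : m < 3) :
    ((m : ℕ) : ZMod n) ≠ 0 := by
  intro h
  rw [ZMod.natCast_eq_zero_iff] at h
  have := Nat.le_of_dvd hm h
  omega

lemma inT6_triple {n : ℕ} (u : ZMod n) (h1 : (1 : ZMod n) ≠ 0) (h2 : (2 : ZMod n) ≠ 0) :
    inT6 ({u, u + 1, u + 2} : Set (ZMod n)) := by
  refine ⟨⟨u, rfl⟩, ?_, ?_⟩
  · rintro ⟨w, hw⟩
    rw [Set.ext_iff] at hw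
    have h : u = w ∨ u = w + 1 := by simpa using (hw u).mp (by simp)
    have h' : u + 1 = w ∨ u + 1 = w + 1 := by simpa using (hw (u + 1)).mp (by simp)
    have h'' : u + 2 = w ∨ u + 2 = w + 1 := by simpa using (hw (u + 2)).mp (by simp)
    rcases h with h | h <;> rcases h' with h' | h' <;> rcases h'' with h'' | h'' <;>
      first
        | exact h1 (by linear_combination h' - h)
        | exact h2 (by linear_combination h' - h)
        | exact h2 (by linear_combination h'' - h)
        | exact h1 (by linear_combination h'' - h')
  · rintro ⟨w, hw⟩
    rw [Set.ext_iff] at hw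
    have h : u = w := by simpa using (hw u).mp (by simp)
    have h' : u + 1 = w := by simpa using (hw (u + 1)).mp (by simp)
    exact h1 (by linear_combination h' - h)

lemma occ_update {n k : ℕ} (C : Config n k) (j : Fin k) (v : ZMod n) :
    occ (Function.update C j v) = insert v {x | ∃ i, i ≠ j ∧ C i = x} := by
  ext x
  constructor
  · rintro ⟨i, hi⟩
    by_cases h : i = j
    · subst h; rw [Function.update_self] at hi; exact Or.inl hi.symm
    · rw [Function.update_of_ne h] at hi; exact Or.inr ⟨i, h, hi⟩
  · rintro (rfl | ⟨i, hij, rfl⟩)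
    · exact ⟨j, Function.update_self _ _ _⟩
    · exact ⟨i, Function.update_of_ne hij _ _⟩

/-- Forced behaviour of move `m6` in a `T6` configuration. -/
lemma m6_cases {n k : ℕ} (u : ZMod n)
    (h1 : (1 : ZMod n) ≠ 0) (h2 : (2 : ZMod n) ≠ 0) (h3 : (3 : ZMod n) ≠ 0)
    (C : Config n k) (j : Fin k) (C' : Config n k)
    (hocc : occ C = {u, u + 1, u + 2}) (hM : M6 C j C') :
    (C j = u + 1 ∧ C' = C) ∨
    ((C j = u ∨ C j = u + 2) ∧ C' = Function.update C j (u + 1)) := by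
  have hj : C j ∈ occ C := ⟨j, rfl⟩
  rw [hocc] at hj
  have hmem : ∀ x : ZMod n, x ∈ occ C ↔ (x = u ∨ x = u + 1 ∨ x = u + 2) := by
    intro x; rw [hocc]; simp
  rcases hM with ⟨d, hd, hout, hin, hC'⟩ | ⟨hall, hC'⟩
  · rcases hd with rfl | rfl
    · -- d = 1
      rcases hj with hcj | hcj | hcj
      · exact absurd ((hmem _).mpr (Or.inr (Or.inl (by rw [hcj]))) ) hout
      · exact absurd ((hmem _).mpr (Or.inr (Or.inr (by rw [hcj]; ring))) ) hout
      · refine Or.inr ⟨Or.inr hcj, ?_⟩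
        rw [hC']; congr 1; rw [hcj]; ring
    · -- d = -1
      rcases hj with hcj | hcj | hcj
      · refine Or.inr ⟨Or.inl hcj, ?_⟩
        rw [hC']; congr 1; rw [hcj]; ring
      · exact absurd ((hmem _).mpr (Or.inl (by rw [hcj]; ring))) hout
      · exact absurd ((hmem _).mpr (Or.inr (Or.inl (by rw [hcj]; ring)))) hout
  · rcases hj with hcj | hcj | hcj
    · exfalso
      have := (hmem _).mp (hall (-1) (Or.inr rfl))
      rw [hcj] at this
      rcases this with h | h | h
      · exact h1 (by linear_combination -h)
      · exact h2 (by linear_combination -h)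
      · exact h3 (by linear_combination -h)
    · exact Or.inl ⟨hcj, hC'⟩
    · exfalso
      have := (hmem _).mp (hall 1 (Or.inl rfl))
      rw [hcj] at this
      rcases this with h | h | h
      · exact h3 (by linear_combination h)
      · exact h2 (by linear_combination h)
      · exact h1 (by linear_combination h)

/-- In any window of `k` consecutive rounds a Round Robin scheduler activates
every robot. -/
lemma rr_window {k : ℕ} (sched : ℕ → Fin k) (hRR : IsRoundRobin sched) (hk : 0 < k)
    (a : ℕ) (j : Fin k) : ∃ t', a ≤ t' ∧ t' + 1 ≤ a + k ∧ sched t' = j := by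
  obtain ⟨π, hπ⟩ := hRR
  set r : ℕ := (π.symm j).val with hr_def
  have hr : r < k := (π.symm j).isLt
  have hak : a % k < k := Nat.mod_lt _ hk
  refine ⟨a + (r + k - a % k) % k, Nat.le_add_right _ _, ?_, ?_⟩
  · have : (r + k - a % k) % k < k := Nat.mod_lt _ hk
    omega
  · have e1 : (a + (r + k - a % k) % k) % k = r := by
      rw [Nat.add_mod_mod]
      have key : a + (r + k - a % k) = k * (a / k) + (k + r) := by
        have := Nat.div_add_mod a k
        omega
      rw [key, ← add_assoc, show k * (a / k) + k = k * (a / k + 1) by ring,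
        Nat.mul_add_mod, Nat.mod_eq_of_lt hr]
    rw [hπ _ (Nat.mod_lt _ hk)]
    have : (⟨(a + (r + k - a % k) % k) % k, Nat.mod_lt _ hk⟩ : Fin k) = π.symm j :=
      Fin.ext (by simpa using e1)
    rw [this, Equiv.apply_symm_apply]
/-- let `C` be a configuration in task `T6` reached, along an
execution under a Round Robin scheduler, from a configuration in task `T5` by a
single move `m5`.  If every robot activated in a configuration in `T6` executes
move `m6`, then the first configuration of the execution after `C` that is not
in `T6` occurs within at most `1` epoch (an epoch being `k` rounds), and it is
in task `T7`. -/
theorem stmt14 (n k : ℕ) (hn : 3 ≤ n)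
    (sched : ℕ → Fin k) (hRR : IsRoundRobin sched)
    (E : ℕ → Config n k) (t₀ : ℕ)
    (h5 : inT5 (occ (E t₀))) (hm5 : M5 (E t₀) (sched t₀) (E (t₀ + 1)))
    (C : Config n k) (hC : C = E (t₀ + 1)) (hT6 : inT6 (occ C))
    (hstep : ∀ t, inT6 (occ (E t)) → M6 (E t) (sched t) (E (t + 1))) :
    ∃ t, t₀ + 1 < t ∧ t ≤ t₀ + 1 + k ∧
      (∀ s, t₀ + 1 ≤ s → s < t → inT6 (occ (E s))) ∧
      ¬ inT6 (occ (E t)) ∧ inT7 (occ (E t)) := by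
  subst hC
  have hk : 0 < k := by
    rcases Nat.eq_zero_or_pos k with h | h
    · subst h; exact (sched 0).elim0
    · exact h
  have h1 : (1 : ZMod n) ≠ 0 := by
    have := zmod_ncast_ne_zero hn 1 (by norm_num) (by norm_num)
    simpa using this
  have h2 : (2 : ZMod n) ≠ 0 := by
    have := zmod_ncast_ne_zero hn 2 (by norm_num) (by norm_num)
    simpa using this
  have h3 : (3 : ZMod n) ≠ 0 := by
    intro h3eq
    obtain ⟨⟨w, hw, _⟩, _, hno2, _⟩ := h5
    apply hno2
    refine ⟨w + 2, ?_⟩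
    rw [hw]
    have hww : w + 2 + 1 = w := by linear_combination h3eq
    rw [hww, Set.pair_comm]
  obtain ⟨u, hu⟩ := hT6.1
  have hne01 : u + 1 ≠ u := fun h => h1 (by linear_combination h)
  have hne12 : u + 1 ≠ u + 2 := fun h => h1 (by linear_combination -h)
  have hne02 : u ≠ u + 2 := fun h => h2 (by linear_combination -h)
  have main : ∀ m, m ≤ k →
      (∃ t, t₀ + 1 < t ∧ t ≤ t₀ + 1 + m ∧
        (∀ s, t₀ + 1 ≤ s → s < t → inT6 (occ (E s))) ∧
        ¬ inT6 (occ (E t)) ∧ inT7 (occ (E t))) ∨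
      ((∀ s, t₀ + 1 ≤ s → s ≤ t₀ + 1 + m →
          occ (E s) = ({u, u + 1, u + 2} : Set (ZMod n))) ∧
       ∀ j : Fin k, (E (t₀ + 1 + m) j = u ∨ E (t₀ + 1 + m) j = u + 2) →
         ∃ t', t₀ + 1 + m ≤ t' ∧ t' + 1 ≤ t₀ + 1 + k ∧ sched t' = j) := by
    intro m
    induction m with
    | zero =>
      intro _
      refine Or.inr ⟨?_, ?_⟩
      · intro s hs1 hs2
        have hs : s = t₀ + 1 := by omega
        rw [hs]; exact hu
      · intro j _
        obtain ⟨t', ht1, ht2, ht3⟩ := rr_window sched hRR hk (t₀ + 1) j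
        exact ⟨t', by omega, by omega, ht3⟩
    | succ m ih =>
      intro hm
      have hidx : t₀ + 1 + (m + 1) = t₀ + 1 + m + 1 := by omega
      rw [hidx]
      rcases ih (by omega) with ⟨t, a1, a2, a3, a4, a5⟩ | ⟨hoccs, hpend⟩
      · exact Or.inl ⟨t, a1, by omega, a3, a4, a5⟩
      · have hsocc : occ (E (t₀ + 1 + m)) = ({u, u + 1, u + 2} : Set (ZMod n)) :=
          hoccs _ (by omega) (by omega)
        have hT6s : inT6 (occ (E (t₀ + 1 + m))) := by
          rw [hsocc]; exact inT6_triple u h1 h2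
        have hM := hstep (t₀ + 1 + m) hT6s
        rcases m6_cases u h1 h2 h3 (E (t₀ + 1 + m)) (sched (t₀ + 1 + m))
            (E (t₀ + 1 + m + 1)) hsocc hM with ⟨hcj, hEq⟩ | ⟨hcj, hEq⟩
        · -- activated robot is on the middle vertex: nothing changes
          refine Or.inr ⟨?_, ?_⟩
          · intro s' h1' h2'
            rcases Nat.lt_or_ge s' (t₀ + 1 + m + 1) with h | h
            · exact hoccs s' h1' (by omega)
            · have hs' : s' = t₀ + 1 + m + 1 := by omega
              rw [hs', hEq]; exact hsocc
          · intro j' hj'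
            rw [hEq] at hj'
            have hj'ne : j' ≠ sched (t₀ + 1 + m) := by
              intro h; rw [h, hcj] at hj'
              rcases hj' with h' | h'
              · exact hne01 h'
              · exact hne12 h'
            obtain ⟨t', ht1, ht2, ht3⟩ := hpend j' hj'
            have htne : t' ≠ t₀ + 1 + m := by
              intro h; rw [h] at ht3; exact hj'ne ht3.symm
            exact ⟨t', by omega, by omega, ht3⟩
        · -- activated robot is on an external vertex and moves to the middle
          have hupd := occ_update (E (t₀ + 1 + m)) (sched (t₀ + 1 + m)) (u + 1)
          by_cases hA : ∃ i, i ≠ sched (t₀ + 1 + m) ∧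
              E (t₀ + 1 + m) i = E (t₀ + 1 + m) (sched (t₀ + 1 + m))
          · -- another robot remains on the same external vertex: still T6
            have hocc1 : occ (E (t₀ + 1 + m + 1)) = ({u, u + 1, u + 2} : Set (ZMod n)) := by
              rw [hEq, hupd]
              ext x
              simp only [Set.mem_insert_iff, Set.mem_singleton_iff, Set.mem_setOf_eq]
              constructor
              · rintro (rfl | ⟨i, hij, rfl⟩)
                · exact Or.inr (Or.inl rfl)
                · have hx' : E (t₀ + 1 + m) i ∈ occ (E (t₀ + 1 + m)) := ⟨i, rfl⟩
                  rw [hsocc] at hx'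
                  simpa using hx'
              · intro hx
                have hx' : x ∈ occ (E (t₀ + 1 + m)) := by
                  rw [hsocc]; simpa using hx
                obtain ⟨i, hi⟩ := hx'
                by_cases hij : i = sched (t₀ + 1 + m)
                · obtain ⟨i', hi'j, hi'⟩ := hA
                  exact Or.inr ⟨i', hi'j, by rw [hi', ← hij]; exact hi⟩
                · exact Or.inr ⟨i, hij, hi⟩
            refine Or.inr ⟨?_, ?_⟩
            · intro s' h1' h2'
              rcases Nat.lt_or_ge s' (t₀ + 1 + m + 1) with h | h
              · exact hoccs s' h1' (by omega)
              · have hs' : s' = t₀ + 1 + m + 1 := by omega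
                rw [hs']; exact hocc1
            · intro j' hj'
              have hj'ne : j' ≠ sched (t₀ + 1 + m) := by
                intro h
                rw [h, hEq, Function.update_self] at hj'
                rcases hj' with h' | h'
                · exact hne01 h'
                · exact hne12 h'
              rw [hEq, Function.update_of_ne hj'ne] at hj'
              obtain ⟨t', ht1, ht2, ht3⟩ := hpend j' hj'
              have htne : t' ≠ t₀ + 1 + m := by
                intro h; rw [h] at ht3; exact hj'ne ht3.symm
              exact ⟨t', by omega, by omega, ht3⟩
          · -- the external vertex becomes empty: the configuration enters T7
            rcases hcj with hcja | hcja
            · -- the robot was on u, the new occupied set is {u+1, u+2}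
              have hocc2 : occ (E (t₀ + 1 + m + 1)) = ({u + 1, u + 2} : Set (ZMod n)) := by
                rw [hEq, hupd]
                ext x
                simp only [Set.mem_insert_iff, Set.mem_singleton_iff, Set.mem_setOf_eq]
                constructor
                · rintro (rfl | ⟨i, hij, rfl⟩)
                  · exact Or.inl rfl
                  · have hx' : E (t₀ + 1 + m) i ∈ occ (E (t₀ + 1 + m)) := ⟨i, rfl⟩
                    rw [hsocc] at hx'
                    simp only [Set.mem_insert_iff, Set.mem_singleton_iff] at hx'
                    rcases hx' with h' | h' | h'
                    · exact absurd ⟨i, hij, by rw [h', hcja]⟩ hA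
                    · exact Or.inl h'
                    · exact Or.inr h'
                · rintro (rfl | rfl)
                  · exact Or.inl rfl
                  · have hx' : u + 2 ∈ occ (E (t₀ + 1 + m)) := by rw [hsocc]; simp
                    obtain ⟨i, hi⟩ := hx'
                    refine Or.inr ⟨i, ?_, hi⟩
                    intro h; rw [h, hcja] at hi; exact hne02 hi
              refine Or.inl ⟨t₀ + 1 + m + 1, by omega, by omega, ?_, ?_, ?_⟩
              · intro s' h1' h2'
                have := hoccs s' h1' (by omega)
                rw [this]; exact inT6_triple u h1 h2
              · intro hT6'
                exact hT6'.2.1 ⟨u + 1, by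
                  rw [hocc2, show (u : ZMod n) + 1 + 1 = u + 2 from by ring]⟩
              · refine ⟨⟨u + 1, by
                  rw [hocc2, show (u : ZMod n) + 1 + 1 = u + 2 from by ring]⟩, ?_⟩
                rintro ⟨w, hw⟩
                rw [hocc2, Set.ext_iff] at hw
                have ha : u + 1 = w := by simpa using (hw (u + 1)).mp (by simp)
                have hb : u + 2 = w := by simpa using (hw (u + 2)).mp (by simp)
                exact h1 (by linear_combination hb - ha)
            · -- the robot was on u+2, the new occupied set is {u, u+1}
              have hocc2 : occ (E (t₀ + 1 + m + 1)) = ({u, u + 1} : Set (ZMod n)) := by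
                rw [hEq, hupd]
                ext x
                simp only [Set.mem_insert_iff, Set.mem_singleton_iff, Set.mem_setOf_eq]
                constructor
                · rintro (rfl | ⟨i, hij, rfl⟩)
                  · exact Or.inr rfl
                  · have hx' : E (t₀ + 1 + m) i ∈ occ (E (t₀ + 1 + m)) := ⟨i, rfl⟩
                    rw [hsocc] at hx'
                    simp only [Set.mem_insert_iff, Set.mem_singleton_iff] at hx'
                    rcases hx' with h' | h' | h'
                    · exact Or.inl h'
                    · exact Or.inr h'
                    · exact absurd ⟨i, hij, by rw [h', hcja]⟩ hA
                · intro hx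
                  rcases hx with hx | hx
                  · have hx' : u ∈ occ (E (t₀ + 1 + m)) := by rw [hsocc]; simp
                    obtain ⟨i, hi⟩ := hx'
                    refine Or.inr ⟨i, ?_, ?_⟩
                    · intro h; rw [h, hcja] at hi; exact hne02 hi.symm
                    · rw [hx]; exact hi
                  · exact Or.inl hx
              refine Or.inl ⟨t₀ + 1 + m + 1, by omega, by omega, ?_, ?_, ?_⟩
              · intro s' h1' h2'
                have := hoccs s' h1' (by omega)
                rw [this]; exact inT6_triple u h1 h2
              · intro hT6'
                exact hT6'.2.1 ⟨u, by rw [hocc2]⟩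
              · refine ⟨⟨u, by rw [hocc2]⟩, ?_⟩
                rintro ⟨w, hw⟩
                rw [hocc2, Set.ext_iff] at hw
                have ha : u = w := by simpa using (hw u).mp (by simp)
                have hb : u + 1 = w := by simpa using (hw (u + 1)).mp (by simp)
                exact h1 (by linear_combination hb - ha)
  rcases main k (le_refl k) with ⟨t, a1, a2, a3, a4, a5⟩ | ⟨hoccs, hpend⟩
  · exact ⟨t, a1, a2, a3, a4, a5⟩
  · exfalso
    have hmem : u ∈ occ (E (t₀ + 1 + k)) := by
      rw [hoccs (t₀ + 1 + k) (by omega) (le_refl _)]; simp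
    obtain ⟨i, hi⟩ := hmem
    obtain ⟨t', ht1, ht2, ht3⟩ := hpend i (Or.inl hi)
    omega

end RobotRing
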